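/- arXiv:2009.04128 — 2 statements merged into one kernel-verified Lean document; each statement's English description precedes it below -/
import Mathlib

section
/- Let p ≥ 1 and let X_1, X_2, … be i.i.d. uniform random variables on [0,1]^d. Define f(n) = E[ W_p^p( (1/n) ∑_{i=1}^n δ_{X_i}, Leb ) ], the expected transportation cost between the empirical measure and the Lebesgue (uniform) measure on [0,1]^d. Then f is nonincreasing in n: for all 1 ≤ m ≤ n, f(n) ≤ f(m). -/
/-
The empirical measure of `n` points is the average, over all `m`-subsets `S` of the indices,
of the empirical measures of the points indexed by `S`, and `W_p^p` is jointly convex. Hence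
`W_p^p` of the `n`-sample is pointwise at most the average of the `W_p^p` of its `m`-subsamples,
and by independence every subsample has the law of `(X₀, …, X_{m-1})`, so each of these terms has
expectation `f m`. Taking expectations needs measurability: `W_p^p` of the empirical measure of a
tuple is continuous at tuples of distinct points (moving atoms by `δ²` costs a factor `(1 + δ)^p`
and an additive `((1 + δ) δ)^p`), and such tuples carry full measure since the uniform law has no
atoms.
-/

open MeasureTheory ENNReal ProbabilityTheory

/-- Transportation cost of order `p`: infimum over couplings. -/
noncomputable def Wcost {X : Type*} [MeasurableSpace X] [PseudoMetricSpace X]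
    (p : ℝ) (μ ν : Measure X) : ℝ≥0∞ :=
  sInf { c | ∃ π : Measure (X × X), π.map Prod.fst = μ ∧ π.map Prod.snd = ν ∧
      c = ∫⁻ z, ENNReal.ofReal (dist z.1 z.2 ^ p) ∂π }

/-- The unit cube `[0,1]^d` in `ℝ^d`. -/
def unitCube (d : ℕ) : Set (EuclideanSpace ℝ (Fin d)) := {x | ∀ j, 0 ≤ x j ∧ x j ≤ 1}

open Filter Topology

section Coupling

variable {E : Type*} [MeasurableSpace E] [PseudoMetricSpace E] {p : ℝ}

lemma Wcost_le_lintegral {μ ν : Measure E} (π : Measure (E × E)) (h₁ : π.map Prod.fst = μ)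
    (h₂ : π.map Prod.snd = ν) : Wcost p μ ν ≤ ∫⁻ z, ENNReal.ofReal (dist z.1 z.2 ^ p) ∂π :=
  sInf_le ⟨π, h₁, h₂, rfl⟩

lemma Wcost_add_le (μ₁ μ₂ ν₁ ν₂ : Measure E) :
    Wcost p (μ₁ + μ₂) (ν₁ + ν₂) ≤ Wcost p μ₁ ν₁ + Wcost p μ₂ ν₂ := by
  conv_rhs => rw [Wcost, Wcost, ENNReal.sInf_add, sInf_eq_iInf]
  simp_rw [ENNReal.add_iInf₂]
  refine le_iInf₂ fun _ ⟨π₁, h₁₁, h₁₂, hπ₁⟩ => le_iInf₂ fun _ ⟨π₂, h₂₁, h₂₂, hπ₂⟩ => ?_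
  refine (Wcost_le_lintegral (π₁ + π₂) ?_ ?_).trans ?_
  · rw [Measure.map_add _ _ measurable_fst, h₁₁, h₂₁]
  · rw [Measure.map_add _ _ measurable_snd, h₁₂, h₂₂]
  · rw [hπ₁, hπ₂, lintegral_add_measure, add_comm]

lemma Wcost_smul_le {c : ℝ≥0∞} (hc₀ : c ≠ 0) (hc : c ≠ ∞) (μ ν : Measure E) :
    Wcost p (c • μ) (c • ν) ≤ c * Wcost p μ ν := by
  conv_rhs => rw [Wcost, sInf_eq_iInf]
  simp_rw [ENNReal.mul_iInf_of_ne hc₀ hc]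
  refine le_iInf₂ fun _ ⟨π, h₁, h₂, hπ⟩ => ?_
  refine (Wcost_le_lintegral (c • π) ?_ ?_).trans ?_
  · rw [Measure.map_smul, h₁]
  · rw [Measure.map_smul, h₂]
  · rw [hπ, lintegral_smul_measure, smul_eq_mul]

lemma Wcost_sum_le {ι : Type*} (s : Finset ι) (μ ν : ι → Measure E) :
    Wcost p (∑ i ∈ s, μ i) (∑ i ∈ s, ν i) ≤ ∑ i ∈ s, Wcost p (μ i) (ν i) := by
  classical
  induction s using Finset.induction_on with
  | empty => simpa using Wcost_le_lintegral (p := p) (0 : Measure (E × E)) (by simp) (by simp)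
  | insert i s hi ih =>
    simp only [Finset.sum_insert hi]
    exact (Wcost_add_le _ _ _ _).trans (by gcongr)

end Coupling

section Averaging

open Finset

variable {α : Type*} [DecidableEq α] {s : Finset α} {m : ℕ}

lemma card_filter_mem_powersetCard {a : α} (ha : a ∈ s) (hm : 0 < m) :
    #{S ∈ s.powersetCard m | a ∈ S} = (#s - 1).choose (m - 1) := by
  simpa using card_filter_powersetCard_subset {a} s m (singleton_subset_iff.2 ha)
    (by rw [card_singleton]; exact hm)

lemma sum_powersetCard_sum {M : Type*} [AddCommMonoid M] (hm : 0 < m) (v : α → M) :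
    ∑ S ∈ s.powersetCard m, ∑ i ∈ S, v i = (#s - 1).choose (m - 1) • ∑ i ∈ s, v i := by
  rw [sum_comm' (t' := s) (s' := fun i => {S ∈ s.powersetCard m | i ∈ S}), smul_sum]
  · exact sum_congr rfl fun i hi => by rw [sum_const, card_filter_mem_powersetCard hi hm]
  · intro S i
    simp only [mem_powersetCard, mem_filter]
    exact ⟨fun ⟨⟨hS, hSm⟩, hi⟩ => ⟨⟨⟨hS, hSm⟩, hi⟩, hS hi⟩, fun ⟨h, _⟩ => ⟨h.1, h.2⟩⟩

lemma inv_smul_sum_eq_inv_smul_sum_powersetCard {M : Type*} [AddCommMonoid M] [Module ℝ≥0∞ M]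
    (hm : 0 < m) (hms : m ≤ #s) (v : α → M) :
    (#s : ℝ≥0∞)⁻¹ • ∑ i ∈ s, v i
      = ((#s).choose m : ℝ≥0∞)⁻¹ • ∑ S ∈ s.powersetCard m, (m : ℝ≥0∞)⁻¹ • ∑ i ∈ S, v i := by
  rw [← smul_sum, sum_powersetCard_sum hm, smul_smul, ← Nat.cast_smul_eq_nsmul ℝ≥0∞, smul_smul]
  congr 1
  obtain ⟨n, hn⟩ : ∃ n, #s = n + 1 := ⟨#s - 1, by omega⟩
  obtain ⟨k, rfl⟩ : ∃ k, m = k + 1 := ⟨m - 1, by omega⟩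
  have hchoose := Nat.add_one_mul_choose_eq n k
  rw [hn] at hms ⊢
  simp only [add_tsub_cancel_right]
  set C : ℝ≥0∞ := ((n + 1).choose (k + 1) : ℝ≥0∞)
  set K : ℝ≥0∞ := ((k + 1 : ℕ) : ℝ≥0∞)
  have key : ((n + 1 : ℕ) : ℝ≥0∞) * n.choose k = C * K := by
    simp only [C, K]; exact_mod_cast hchoose
  have hC : C ≠ 0 := by simp only [C]; exact_mod_cast (Nat.choose_pos (by omega)).ne'
  refine (ENNReal.eq_inv_of_mul_eq_one_left ?_).symm
  calc C⁻¹ * K⁻¹ * n.choose k * ((n + 1 : ℕ) : ℝ≥0∞)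
      = C⁻¹ * K⁻¹ * (((n + 1 : ℕ) : ℝ≥0∞) * n.choose k) := by ring
    _ = (C⁻¹ * C) * (K⁻¹ * K) := by rw [key]; ring
    _ = 1 := by
        rw [ENNReal.inv_mul_cancel hC (by simp [C]),
          ENNReal.inv_mul_cancel (by simp [K]) (by simp [K]), one_mul]

lemma Wcost_inv_smul_sum_le {E : Type*} [MeasurableSpace E] [PseudoMetricSpace E] {p : ℝ}
    (hm : 0 < m) (hms : m ≤ #s) (μ : α → Measure E) (ν : Measure E) :
    Wcost p ((#s : ℝ≥0∞)⁻¹ • ∑ i ∈ s, μ i) ν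
      ≤ ((#s).choose m : ℝ≥0∞)⁻¹ *
          ∑ S ∈ s.powersetCard m, Wcost p ((m : ℝ≥0∞)⁻¹ • ∑ i ∈ S, μ i) ν := by
  set C : ℝ≥0∞ := ((#s).choose m : ℝ≥0∞)
  have hC : C ≠ 0 := by simp only [C]; exact_mod_cast (Nat.choose_pos hms).ne'
  have hν : ν = C⁻¹ • ∑ _S ∈ s.powersetCard m, ν := by
    rw [sum_const, card_powersetCard, ← Nat.cast_smul_eq_nsmul ℝ≥0∞, smul_smul,
      ENNReal.inv_mul_cancel hC (by simp [C]), one_smul]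
  calc Wcost p ((#s : ℝ≥0∞)⁻¹ • ∑ i ∈ s, μ i) ν
      = Wcost p (C⁻¹ • ∑ S ∈ s.powersetCard m, (m : ℝ≥0∞)⁻¹ • ∑ i ∈ S, μ i)
          (C⁻¹ • ∑ _S ∈ s.powersetCard m, ν) := by
        rw [← hν, inv_smul_sum_eq_inv_smul_sum_powersetCard hm hms]
    _ ≤ C⁻¹ * Wcost p (∑ S ∈ s.powersetCard m, (m : ℝ≥0∞)⁻¹ • ∑ i ∈ S, μ i)
          (∑ _S ∈ s.powersetCard m, ν) :=
        Wcost_smul_le (ENNReal.inv_ne_zero.2 (by simp [C])) (ENNReal.inv_ne_top.2 hC) _ _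
    _ ≤ _ := by gcongr; exact Wcost_sum_le _ _ _

end Averaging

lemma Real.add_rpow_le_of_le_sq {p s t δ : ℝ} (hp : 0 ≤ p) (hs : 0 ≤ s) (ht : 0 ≤ t)
    (hδ : 0 ≤ δ) (hsδ : s ≤ δ ^ 2) :
    (s + t) ^ p ≤ (1 + δ) ^ p * t ^ p + ((1 + δ) * δ) ^ p := by
  rcases le_total δ t with hδt | htδ
  · have : s + t ≤ (1 + δ) * t := by nlinarith
    calc (s + t) ^ p ≤ ((1 + δ) * t) ^ p := Real.rpow_le_rpow (by positivity) this hp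
      _ = (1 + δ) ^ p * t ^ p := Real.mul_rpow (by positivity) ht
      _ ≤ _ := le_add_of_nonneg_right (by positivity)
  · have : s + t ≤ (1 + δ) * δ := by nlinarith
    calc (s + t) ^ p ≤ ((1 + δ) * δ) ^ p := Real.rpow_le_rpow (by positivity) this hp
      _ ≤ _ := le_add_of_nonneg_left (by positivity)

lemma ENNReal.continuousAt_of_le_mul_add {X β : Type*} [TopologicalSpace X] {f : X → ℝ≥0∞}
    {x : X} {l : Filter β} [l.NeBot] {a b : β → ℝ≥0∞} (ha : Tendsto a l (𝓝 1))
    (hb : Tendsto b l (𝓝 0))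
    (h : ∀ᶠ η in l, ∀ᶠ y in 𝓝 x, f y ≤ a η * f x + b η ∧ f x ≤ a η * f y + b η) :
    ContinuousAt f x := by
  have hlim (c : ℝ≥0∞) (hc : c ≠ ∞) : Tendsto (fun η => a η * c + b η) l (𝓝 c) := by
    simpa using (ENNReal.Tendsto.mul_const ha (Or.inr hc)).add hb
  refine tendsto_order.2 ⟨fun u hu => ?_, fun u hu => ?_⟩
  · obtain ⟨v, huv, hvx⟩ := exists_between hu
    obtain ⟨η, hη, hv⟩ := (h.and ((hlim v hvx.ne_top).eventually (gt_mem_nhds hvx))).exists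
    filter_upwards [hη] with y hy
    refine huv.trans_le (not_lt.1 fun hyv => hv.not_ge ?_)
    calc f x ≤ a η * f y + b η := hy.2
      _ ≤ a η * v + b η := by gcongr
  · obtain ⟨η, hη, hu⟩ := (h.and ((hlim _ hu.ne_top).eventually (gt_mem_nhds hu))).exists
    filter_upwards [hη] with y hy using hy.1.trans_lt hu

lemma measurable_extend_id {ι E : Type*} [Finite ι] [MeasurableSpace E]
    [MeasurableSingletonClass E] (x y : ι → E) : Measurable (Function.extend x y id) := by
  refine measurable_of_restrict_of_restrict_compl (Set.finite_range x).measurableSet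
    (measurable_of_countable _) ?_
  have : (Set.range x)ᶜ.domRestrict (Function.extend x y id) = Subtype.val :=
    funext fun z => Function.extend_apply' _ _ _ fun ⟨i, hi⟩ => z.2 ⟨i, hi⟩
  rw [this]
  exact measurable_subtype_coe

section EmpiricalMeasure

variable {ι E : Type*} [Fintype ι] [MeasurableSpace E]

noncomputable def empiricalMeasure (x : ι → E) : Measure E :=
  (Fintype.card ι : ℝ≥0∞)⁻¹ • ∑ i, Measure.dirac (x i)

instance [Nonempty ι] (x : ι → E) : IsProbabilityMeasure (empiricalMeasure x) := by
  constructor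
  simp [empiricalMeasure, ENNReal.inv_mul_cancel]

lemma map_empiricalMeasure {F : Type*} [MeasurableSpace F] {φ : E → F} (hφ : Measurable φ)
    (x : ι → E) : (empiricalMeasure x).map φ = empiricalMeasure (φ ∘ x) := by
  simp [empiricalMeasure, Measure.map_smul, Measure.map_finset_sum hφ.aemeasurable,
    Measure.map_dirac' hφ]

lemma ae_empiricalMeasure_mem_range [MeasurableSingletonClass E] (x : ι → E) :
    ∀ᵐ z ∂empiricalMeasure x, z ∈ Set.range x := by
  simp [ae_iff, empiricalMeasure, Measure.dirac_apply]

end EmpiricalMeasure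

section Perturbation

variable {ι E : Type*} [Fintype ι] [Nonempty ι] [MeasurableSpace E] [MeasurableSingletonClass E]

/-- A coupling of `empiricalMeasure x` and `ν`, pushed forward along a map sending each atom
`x i` to `y i` (which exists as `x` is injective), couples `empiricalMeasure y` and `ν`. -/
lemma Wcost_empiricalMeasure_le [PseudoMetricSpace E] {p δ : ℝ} (hp : 0 ≤ p) (hδ : 0 ≤ δ)
    {x y : ι → E} (hx : Function.Injective x) (hxy : ∀ i, dist (y i) (x i) ≤ δ ^ 2)
    (ν : Measure E) :
    Wcost p (empiricalMeasure y) ν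
      ≤ ENNReal.ofReal ((1 + δ) ^ p) * Wcost p (empiricalMeasure x) ν
        + ENNReal.ofReal (((1 + δ) * δ) ^ p) := by
  set a := ENNReal.ofReal ((1 + δ) ^ p)
  set b := ENNReal.ofReal (((1 + δ) * δ) ^ p)
  have ha : a ≠ 0 := (ENNReal.ofReal_pos.2 (by positivity)).ne'
  conv_rhs => rw [Wcost, sInf_eq_iInf]
  simp_rw [ENNReal.mul_iInf_of_ne ha ENNReal.ofReal_ne_top, ENNReal.iInf_add]
  refine le_iInf₂ fun _ ⟨π, h₁, h₂, hπ⟩ => ?_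
  set φ := Function.extend x y id
  have hφ : Measurable φ := measurable_extend_id x y
  have hφx : ∀ i, φ (x i) = y i := hx.extend_apply y id
  have hφπ : Measurable (Prod.map φ (id : E → E)) := hφ.prodMap measurable_id
  have hπ₁ : ∀ᵐ z ∂π, z.1 ∈ Set.range x :=
    ae_of_ae_map measurable_fst.aemeasurable (h₁ ▸ ae_empiricalMeasure_mem_range x)
  have hπuniv : π Set.univ = 1 := by
    rw [← Set.preimage_univ (f := Prod.fst), ← Measure.map_apply measurable_fst .univ, h₁,
      measure_univ]
  refine (Wcost_le_lintegral (π.map (Prod.map φ id)) ?_ ?_).trans ?_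
  · rw [Measure.map_map measurable_fst hφπ, Prod.map_fst', ← Measure.map_map hφ measurable_fst,
      h₁, map_empiricalMeasure hφ]
    congr 1
    exact funext hφx
  · rwa [Measure.map_map measurable_snd hφπ, Prod.map_snd']
  calc ∫⁻ z, ENNReal.ofReal (dist z.1 z.2 ^ p) ∂π.map (Prod.map φ id)
      ≤ ∫⁻ z, ENNReal.ofReal (dist (φ z.1) z.2 ^ p) ∂π := lintegral_map_le _ _
    _ ≤ ∫⁻ z, (a * ENNReal.ofReal (dist z.1 z.2 ^ p) + b) ∂π := by
        refine lintegral_mono_ae (hπ₁.mono fun z ⟨i, hi⟩ => ?_)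
        have hdist : dist (φ z.1) z.2 ≤ dist (y i) (x i) + dist z.1 z.2 := by
          rw [← hi, hφx]
          exact dist_triangle _ _ _
        rw [← ENNReal.ofReal_mul (by positivity), ← ENNReal.ofReal_add (by positivity)
          (by positivity)]
        refine ENNReal.ofReal_le_ofReal ((Real.rpow_le_rpow dist_nonneg hdist hp).trans ?_)
        exact Real.add_rpow_le_of_le_sq hp dist_nonneg dist_nonneg hδ (hxy i)
    _ = a * ∫⁻ z, ENNReal.ofReal (dist z.1 z.2 ^ p) ∂π + b := by
        rw [lintegral_add_right _ measurable_const, lintegral_const_mul' _ _ ENNReal.ofReal_ne_top,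
          lintegral_const, hπuniv, mul_one]
    _ = _ := by rw [hπ]

end Perturbation

section InjectiveTuples

variable {ι E : Type*}

lemma setOf_not_injective_eq :
    {y : ι → E | ¬Function.Injective y} = ⋃ i, ⋃ j, ⋃ (_ : i ≠ j), {y | y i = y j} := by
  ext y
  simp [Function.Injective, and_comm]

lemma isOpen_setOf_injective [TopologicalSpace E] [T2Space E] [Finite ι] :
    IsOpen {y : ι → E | Function.Injective y} := by
  rw [← isClosed_compl_iff, Set.compl_ofPred, setOf_not_injective_eq]
  exact isClosed_iUnion_of_finite fun i => isClosed_iUnion_of_finite fun j =>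
    isClosed_iUnion_of_finite fun _ => isClosed_eq (continuous_apply i) (continuous_apply j)

lemma measure_pi_setOf_not_injective [Fintype ι] [MeasurableSpace E] [MeasurableEq E]
    (μ : Measure E) [IsProbabilityMeasure μ] [NullSingletonClass μ] :
    Measure.pi (fun _ : ι => μ) {y | ¬Function.Injective y} = 0 := by
  rw [setOf_not_injective_eq]
  refine measure_iUnion_null fun i => measure_iUnion_null fun j => measure_iUnion_null fun hij => ?_
  have hindep : IndepFun (fun y : ι → E => y i) (fun y => y j) (Measure.pi fun _ => μ) :=
    (iIndepFun_pi (X := fun _ => id) fun _ => aemeasurable_id).indepFun hij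
  have hpair : (Measure.pi fun _ : ι => μ).map (fun y => (y i, y j)) = μ.prod μ := by
    rw [(indepFun_iff_map_prod_eq_prod_map_map (measurable_pi_apply i).aemeasurable
      (measurable_pi_apply j).aemeasurable).1 hindep, (measurePreserving_eval _ i).map_eq,
      (measurePreserving_eval _ j).map_eq]
  have hdiag : μ.prod μ (Set.diagonal E) = 0 := by
    rw [Measure.prod_apply measurableSet_diagonal]
    simp [Set.preimage, Set.diagonal]
  rw [← hdiag, ← hpair, Measure.map_apply ((measurable_pi_apply i).prodMk (measurable_pi_apply j))
    measurableSet_diagonal]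
  rfl

end InjectiveTuples

section Regularity

variable {ι E : Type*} [Fintype ι] [Nonempty ι] [MetricSpace E] [MeasurableSpace E]
  [MeasurableSingletonClass E] {p : ℝ}

lemma continuousAt_Wcost_empiricalMeasure (hp : 0 < p) (ν : Measure E) {x : ι → E}
    (hx : Function.Injective x) :
    ContinuousAt (fun y => Wcost p (empiricalMeasure y) ν) x := by
  have hlim (f : ℝ → ℝ) (hf : Continuous f) :
      Tendsto (fun δ => ENNReal.ofReal (f δ ^ p)) (𝓝[>] 0) (𝓝 (ENNReal.ofReal (f 0 ^ p))) :=
    ((ENNReal.continuous_ofReal.comp (hf.rpow_const fun _ => Or.inr hp.le)).tendsto 0).mono_left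
      nhdsWithin_le_nhds
  refine ENNReal.continuousAt_of_le_mul_add (l := 𝓝[>] (0 : ℝ))
    (a := fun δ => ENNReal.ofReal ((1 + δ) ^ p)) (b := fun δ => ENNReal.ofReal (((1 + δ) * δ) ^ p))
    (by simpa using hlim (1 + ·) (by fun_prop))
    (by simpa [hp.ne'] using hlim (fun δ => (1 + δ) * δ) (by fun_prop)) ?_
  filter_upwards [self_mem_nhdsWithin] with δ (hδ : 0 < δ)
  have hclose : ∀ᶠ y in 𝓝 x, ∀ i, dist (y i) (x i) ≤ δ ^ 2 := by
    filter_upwards [Metric.closedBall_mem_nhds x (pow_pos hδ 2)] with y hy i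
    exact (dist_le_pi_dist y x i).trans hy
  filter_upwards [isOpen_setOf_injective.mem_nhds hx, hclose] with y hy hyx
  exact ⟨Wcost_empiricalMeasure_le hp.le hδ.le hx hyx ν,
    Wcost_empiricalMeasure_le hp.le hδ.le hy (fun i => dist_comm (x i) (y i) ▸ hyx i) ν⟩

lemma aemeasurable_Wcost_empiricalMeasure [BorelSpace E] [SecondCountableTopology E] (hp : 0 < p)
    (ν : Measure E) (μ : Measure E) [IsProbabilityMeasure μ] [NullSingletonClass μ] :
    AEMeasurable (fun y : ι → E => Wcost p (empiricalMeasure y) ν) (Measure.pi fun _ => μ) := by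
  have h := ContinuousOn.aemeasurable (μ := Measure.pi fun _ : ι => μ)
    (fun y hy => (continuousAt_Wcost_empiricalMeasure hp ν hy).continuousWithinAt)
    isOpen_setOf_injective.measurableSet
  rwa [Measure.restrict_eq_self_of_ae_mem (measure_pi_setOf_not_injective μ)] at h

end Regularity

lemma aemeasurable_Wcost_empiricalMeasure_volume_restrict {d : ℕ} {ι : Type*} [Fintype ι]
    [Nonempty ι] {p : ℝ} (hp : 0 < p) (ν : Measure (EuclideanSpace ℝ (Fin d)))
    (s : Set (EuclideanSpace ℝ (Fin d))) [IsProbabilityMeasure (volume.restrict s)] :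
    AEMeasurable (fun y : ι → EuclideanSpace ℝ (Fin d) => Wcost p (empiricalMeasure y) ν)
      (Measure.pi fun _ => volume.restrict s) := by
  -- for `d = 0` the measure has an atom, but then every function is measurable
  rcases subsingleton_or_nontrivial (EuclideanSpace ℝ (Fin d)) with _ | _
  · exact Subsingleton.measurable.aemeasurable
  · exact aemeasurable_Wcost_empiricalMeasure hp ν _

lemma inv_smul_sum_dirac_eq_empiricalMeasure {α E : Type*} [LinearOrder α] [MeasurableSpace E]
    {S : Finset α} {m : ℕ} (hS : S.card = m) (x : α → E) :
    (m : ℝ≥0∞)⁻¹ • ∑ i ∈ S, Measure.dirac (x i) = empiricalMeasure (x ∘ S.orderEmbOfFin hS) := by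
  have h := Finset.sum_map Finset.univ (S.orderEmbOfFin hS).toEmbedding fun i => Measure.dirac (x i)
  rw [S.map_orderEmbOfFin_univ hS] at h
  rw [empiricalMeasure, Fintype.card_fin, h]
  rfl

namespace ProbabilityTheory.iIndepFun

variable {Ω E κ : Type*} [MeasurableSpace Ω] {P : Measure Ω} [IsProbabilityMeasure P]
  [MeasurableSpace E] {X : κ → Ω → E} {μ : Measure E}

lemma map_comp_eq_pi {ι : Type*} [Fintype ι] {σ : ι → κ} (hindep : iIndepFun X P)
    (hX : ∀ k, Measurable (X k)) (hlaw : ∀ k, P.map (X k) = μ) (hσ : Function.Injective σ) :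
    P.map (fun ω i => X (σ i) ω) = Measure.pi fun _ => μ := by
  rw [(iIndepFun_iff_map_fun_eq_pi_map fun i => (hX (σ i)).aemeasurable).1 (hindep.precomp hσ)]
  simp only [hlaw]

variable [LinearOrder κ] [PseudoMetricSpace E] {p : ℝ} {ν : Measure E} {m : ℕ} {S : Finset κ}

lemma aemeasurable_Wcost_sample (hindep : iIndepFun X P) (hX : ∀ k, Measurable (X k))
    (hlaw : ∀ k, P.map (X k) = μ) (hS : S.card = m)
    (hW : AEMeasurable (fun y : Fin m → E => Wcost p (empiricalMeasure y) ν)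
      (Measure.pi fun _ => μ)) :
    AEMeasurable (fun ω => Wcost p ((m : ℝ≥0∞)⁻¹ • ∑ i ∈ S, Measure.dirac (X i ω)) ν) P := by
  simp_rw [inv_smul_sum_dirac_eq_empiricalMeasure hS]
  rw [← hindep.map_comp_eq_pi hX hlaw (S.orderEmbOfFin hS).injective] at hW
  exact hW.comp_aemeasurable (measurable_pi_lambda _ fun i => hX _).aemeasurable

lemma lintegral_Wcost_sample_eq (hindep : iIndepFun X P) (hX : ∀ k, Measurable (X k))
    (hlaw : ∀ k, P.map (X k) = μ) (hS : S.card = m)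
    (hW : AEMeasurable (fun y : Fin m → E => Wcost p (empiricalMeasure y) ν)
      (Measure.pi fun _ => μ)) :
    ∫⁻ ω, Wcost p ((m : ℝ≥0∞)⁻¹ • ∑ i ∈ S, Measure.dirac (X i ω)) ν ∂P
      = ∫⁻ y, Wcost p (empiricalMeasure y) ν ∂(Measure.pi fun _ : Fin m => μ) := by
  simp_rw [inv_smul_sum_dirac_eq_empiricalMeasure hS]
  rw [← hindep.map_comp_eq_pi hX hlaw (S.orderEmbOfFin hS).injective] at hW ⊢
  exact (lintegral_map' hW (measurable_pi_lambda _ fun i => hX _).aemeasurable).symm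

end ProbabilityTheory.iIndepFun

open Finset in
/-- Monotonicity of the expected matching cost to the reference measure: for
i.i.d. uniform points `X₁, X₂, …` on `[0,1]^d` and
`f(n) = E[W_p^p((1/n)∑_{i<n} δ_{X_i}, Leb)]`, one has `f(n) ≤ f(m)` for
`1 ≤ m ≤ n`. -/
theorem expected_matching_cost_antitone (d : ℕ) (p : ℝ) (hp : 1 ≤ p)
    (Ω : Type) [MeasurableSpace Ω] (P : Measure Ω) [IsProbabilityMeasure P]
    (X : ℕ → Ω → EuclideanSpace ℝ (Fin d)) (hmeas : ∀ i, Measurable (X i))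
    (hindep : iIndepFun X P)
    (hlaw : ∀ i, P.map (X i) = volume.restrict (unitCube d))
    (m n : ℕ) (hm : 1 ≤ m) (hmn : m ≤ n) :
    (∫⁻ ω, Wcost p
        ((n : ℝ≥0∞)⁻¹ • ∑ i ∈ Finset.range n, Measure.dirac (X i ω))
        (volume.restrict (unitCube d)) ∂P)
      ≤ ∫⁻ ω, Wcost p
          ((m : ℝ≥0∞)⁻¹ • ∑ i ∈ Finset.range m, Measure.dirac (X i ω))
          (volume.restrict (unitCube d)) ∂P := by
  set Leb := volume.restrict (unitCube d)
  have : IsProbabilityMeasure Leb :=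
    hlaw 0 ▸ Measure.isProbabilityMeasure_map (hmeas 0).aemeasurable
  have : Nonempty (Fin m) := ⟨⟨0, hm⟩⟩
  have hW := aemeasurable_Wcost_empiricalMeasure_volume_restrict (ι := Fin m) (by linarith) Leb
    (unitCube d)
  have hS (S) (hS : S ∈ (range n).powersetCard m) : #S = m := (mem_powersetCard.1 hS).2
  have hC : (n.choose m : ℝ≥0∞) ≠ 0 := by exact_mod_cast (Nat.choose_pos hmn).ne'
  calc _ ≤ ∫⁻ ω, (n.choose m : ℝ≥0∞)⁻¹ * ∑ S ∈ (range n).powersetCard m,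
          Wcost p ((m : ℝ≥0∞)⁻¹ • ∑ i ∈ S, Measure.dirac (X i ω)) Leb ∂P :=
        lintegral_mono fun ω => by
          simpa using Wcost_inv_smul_sum_le (s := range n) hm (by simpa using hmn) _ Leb
    _ = (n.choose m : ℝ≥0∞)⁻¹ * ∑ S ∈ (range n).powersetCard m,
          ∫⁻ ω, Wcost p ((m : ℝ≥0∞)⁻¹ • ∑ i ∈ S, Measure.dirac (X i ω)) Leb ∂P := by
        rw [lintegral_const_mul' _ _ (ENNReal.inv_ne_top.2 hC), lintegral_finsetSum' _
          fun S hS' => hindep.aemeasurable_Wcost_sample hmeas hlaw (hS S hS') hW]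
    _ = ∫⁻ y, Wcost p (empiricalMeasure y) Leb ∂(Measure.pi fun _ : Fin m => Leb) := by
        rw [sum_congr rfl fun S hS' => hindep.lintegral_Wcost_sample_eq hmeas hlaw (hS S hS') hW,
          sum_const, card_powersetCard, card_range, nsmul_eq_mul, ← mul_assoc,
          ENNReal.inv_mul_cancel hC (by simp), one_mul]
    _ = _ := (hindep.lintegral_Wcost_sample_eq hmeas hlaw (card_range m) hW).symm
end

section
/- Let p ≥ 1, d ≥ 1, and f satisfy the homogeneity, boundedness and monotonicity assumptions of the de-Poissonization setting (f(L,n) = L^p f(1,n); f(1,n) ≤ C₀; f(1,·) nonincreasing). With N_L Poisson of parameter L^d and F(L) = E[f(L, N_L)], one has lim_{n→∞} n^{p/d} f(1, n) = lim_{L→∞} F(L), in the sense that if one of the two limits exists then so does the other and they are equal. -/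
/-!
Write `g = f 1` and `G μ = ∑ₙ P(N_μ = n) g n` for the Poisson transform of `g`, so that
`F L = (L ^ d) ^ (p / d) * G (L ^ d)`. Because `g` is nonincreasing and bounded by `C₀`, for
`r < 1 < r'` the value `G μ` lies between `g ⌈r' μ⌉` and `g ⌊r μ⌋` up to Chernoff errors of size
`C₀ exp (-c μ)`, which stay negligible after multiplication by `μ ^ (p / d)`. Hence both limits
agree up to the factors `r ^ (-p / d)` and `r' ^ (-p / d)`, which tend to `1` as `r, r' → 1`.
-/

open Filter ProbabilityTheory Real Topology
open scoped Nat

noncomputable def poissonWeight (μ : ℝ) (n : ℕ) : ℝ := exp (-μ) * μ ^ n / n !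

lemma poissonWeight_nonneg {μ : ℝ} (hμ : 0 ≤ μ) (n : ℕ) : 0 ≤ poissonWeight μ n := by
  unfold poissonWeight; positivity

lemma hasSum_poissonWeight_mul_pow (μ r : ℝ) :
    HasSum (fun n ↦ poissonWeight μ n * r ^ n) (exp (μ * (r - 1))) := by
  have h := (NormedSpace.expSeries_div_hasSum_exp (μ * r)).mul_left (exp (-μ))
  rw [← exp_eq_exp_ℝ, ← exp_add, neg_add_eq_sub, ← mul_sub_one] at h
  refine h.congr_fun fun n ↦ ?_
  simp only [poissonWeight, mul_pow]
  ring

lemma hasSum_poissonWeight (μ : ℝ) : HasSum (poissonWeight μ) 1 := by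
  simpa using hasSum_poissonWeight_mul_pow μ 1

lemma summable_poissonWeight (μ : ℝ) : Summable (poissonWeight μ) :=
  (hasSum_poissonWeight μ).summable

lemma poissonPMF_toReal (r : NNReal) (n : ℕ) :
    (poissonPMF r n).toReal = poissonWeight r n :=
  ENNReal.toReal_ofReal (poissonWeight_nonneg r.2 n)

noncomputable def chernoffExponent (r : ℝ) : ℝ := r - 1 - r * log r

lemma chernoffExponent_neg {r : ℝ} (hr0 : 0 < r) (hr1 : r ≠ 1) : chernoffExponent r < 0 := by
  have h := log_lt_sub_one_of_pos (inv_pos.2 hr0) (inv_ne_one.2 hr1)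
  rw [log_inv] at h
  have := mul_lt_mul_of_pos_left h hr0
  rw [mul_sub, mul_inv_cancel₀ hr0.ne'] at this
  unfold chernoffExponent
  linarith

lemma exp_div_pow_le_exp_chernoffExponent {μ r : ℝ} {m : ℕ} (hr : 0 < r)
    (hm : r * μ * log r ≤ m * log r) :
    exp (μ * (r - 1)) / r ^ m ≤ exp (chernoffExponent r * μ) := by
  rw [← exp_log (pow_pos hr m), ← exp_sub, log_pow, exp_le_exp, chernoffExponent]
  linarith

-- Markov's inequality for `r ^ N_μ`, whose mean is `exp (μ * (r - 1))`.
lemma sum_range_poissonWeight_le {μ r : ℝ} (hμ : 0 ≤ μ) (hr0 : 0 < r) (hr1 : r ≤ 1) {m : ℕ}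
    (hm : m ≤ r * μ) :
    ∑ n ∈ Finset.range m, poissonWeight μ n ≤ exp (chernoffExponent r * μ) := by
  have hrm := pow_pos hr0 m
  calc ∑ n ∈ Finset.range m, poissonWeight μ n
      ≤ ∑ n ∈ Finset.range m, poissonWeight μ n * r ^ n / r ^ m := by
        refine Finset.sum_le_sum fun n hn ↦ ?_
        rw [le_div_iff₀ hrm]
        exact mul_le_mul_of_nonneg_left
          (pow_le_pow_of_le_one hr0.le hr1 (Finset.mem_range.1 hn).le) (poissonWeight_nonneg hμ n)
    _ ≤ exp (μ * (r - 1)) / r ^ m := by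
        rw [← Finset.sum_div]
        gcongr
        exact sum_le_hasSum _ (fun n _ ↦ mul_nonneg (poissonWeight_nonneg hμ n) (pow_pos hr0 n).le)
          (hasSum_poissonWeight_mul_pow μ r)
    _ ≤ exp (chernoffExponent r * μ) :=
        exp_div_pow_le_exp_chernoffExponent hr0
          (mul_le_mul_of_nonpos_right hm (log_nonpos hr0.le hr1))

lemma tsum_poissonWeight_add_le {μ r : ℝ} (hμ : 0 ≤ μ) (hr : 1 ≤ r) {m : ℕ} (hm : r * μ ≤ m) :
    ∑' n, poissonWeight μ (n + m) ≤ exp (chernoffExponent r * μ) := by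
  have hr0 : 0 < r := by linarith
  have hrm := pow_pos hr0 m
  have hsum := (hasSum_poissonWeight_mul_pow μ r).summable
  have hnonneg : ∀ n, 0 ≤ poissonWeight μ n * r ^ n :=
    fun n ↦ mul_nonneg (poissonWeight_nonneg hμ n) (pow_pos hr0 n).le
  calc ∑' n, poissonWeight μ (n + m)
      ≤ ∑' n, poissonWeight μ (n + m) * r ^ (n + m) / r ^ m := by
        refine Summable.tsum_le_tsum (fun n ↦ ?_)
          ((summable_nat_add_iff m).2 (summable_poissonWeight μ))
          (((summable_nat_add_iff m).2 hsum).div_const _)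
        rw [le_div_iff₀ hrm]
        exact mul_le_mul_of_nonneg_left (pow_le_pow_right₀ hr (Nat.le_add_left m n))
          (poissonWeight_nonneg hμ _)
    _ ≤ exp (μ * (r - 1)) / r ^ m := by
        rw [tsum_div_const, ← (hasSum_poissonWeight_mul_pow μ r).tsum_eq]
        gcongr ?_ / _
        exact tsum_comp_le_tsum_of_inj hsum hnonneg (add_left_injective m)
    _ ≤ exp (chernoffExponent r * μ) :=
        exp_div_pow_le_exp_chernoffExponent hr0
          (mul_le_mul_of_nonneg_right hm (log_nonneg hr))

lemma tendsto_rpow_mul_exp_chernoffExponent_mul (s : ℝ) {r : ℝ} (hr0 : 0 < r) (hr1 : r ≠ 1) :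
    Tendsto (fun μ ↦ μ ^ s * exp (chernoffExponent r * μ)) atTop (𝓝 0) := by
  simpa using tendsto_rpow_mul_exp_neg_mul_atTop_nhds_zero s _
    (neg_pos.2 (chernoffExponent_neg hr0 hr1))

noncomputable def poissonTransform (g : ℕ → ℝ) (μ : ℝ) : ℝ := ∑' n, poissonWeight μ n * g n

section PoissonTransform

variable {g : ℕ → ℝ} {C μ : ℝ} (hg0 : ∀ n, 0 ≤ g n) (hgC : ∀ n, g n ≤ C)
include hg0 hgC

lemma summable_poissonWeight_mul (hμ : 0 ≤ μ) : Summable fun n ↦ poissonWeight μ n * g n :=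
  Summable.of_nonneg_of_le (fun n ↦ mul_nonneg (poissonWeight_nonneg hμ n) (hg0 n))
    (fun n ↦ mul_le_mul_of_nonneg_left (hgC n) (poissonWeight_nonneg hμ n))
    ((summable_poissonWeight μ).mul_right C)

lemma poissonTransform_le (hg : Antitone g) (hμ : 0 ≤ μ) (m : ℕ) :
    poissonTransform g μ ≤ C * ∑ n ∈ Finset.range m, poissonWeight μ n + g m := by
  have hsum := summable_poissonWeight_mul hg0 hgC hμ
  rw [poissonTransform, ← hsum.sum_add_tsum_nat_add m, Finset.mul_sum]
  refine add_le_add (Finset.sum_le_sum fun n _ ↦ ?_) ?_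
  · rw [mul_comm C]
    exact mul_le_mul_of_nonneg_left (hgC n) (poissonWeight_nonneg hμ n)
  · calc ∑' n, poissonWeight μ (n + m) * g (n + m)
        ≤ ∑' n, poissonWeight μ (n + m) * g m :=
          Summable.tsum_le_tsum
            (fun n ↦ mul_le_mul_of_nonneg_left (hg (Nat.le_add_left m n))
              (poissonWeight_nonneg hμ _))
            ((summable_nat_add_iff m).2 hsum)
            (((summable_nat_add_iff m).2 (summable_poissonWeight μ)).mul_right _)
      _ ≤ ∑' n, poissonWeight μ n * g m := by
          rw [tsum_mul_right, tsum_mul_right]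
          gcongr ?_ * _
          · exact hg0 m
          exact tsum_comp_le_tsum_of_inj (summable_poissonWeight μ) (poissonWeight_nonneg hμ)
            (add_left_injective m)
      _ = g m := by rw [tsum_mul_right, (hasSum_poissonWeight μ).tsum_eq, one_mul]

lemma le_poissonTransform (hg : Antitone g) (hμ : 0 ≤ μ) (m : ℕ) :
    g m - C * ∑' n, poissonWeight μ (n + (m + 1)) ≤ poissonTransform g μ := by
  have hsum := summable_poissonWeight_mul hg0 hgC hμ
  have hhead : ∑ n ∈ Finset.range (m + 1), poissonWeight μ n
      = 1 - ∑' n, poissonWeight μ (n + (m + 1)) := by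
    rw [eq_sub_iff_add_eq, (summable_poissonWeight μ).sum_add_tsum_nat_add,
      (hasSum_poissonWeight μ).tsum_eq]
  calc g m - C * ∑' n, poissonWeight μ (n + (m + 1))
      ≤ g m - g m * ∑' n, poissonWeight μ (n + (m + 1)) := by
        gcongr
        · exact tsum_nonneg fun n ↦ poissonWeight_nonneg hμ _
        · exact hgC m
    _ = ∑ n ∈ Finset.range (m + 1), poissonWeight μ n * g m := by
        rw [← Finset.sum_mul, hhead]
        ring
    _ ≤ ∑ n ∈ Finset.range (m + 1), poissonWeight μ n * g n := by
        gcongr with n hn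
        · exact poissonWeight_nonneg hμ n
        · exact hg (Finset.mem_range_succ_iff.1 hn)
    _ ≤ poissonTransform g μ :=
        hsum.sum_le_tsum _ fun n _ ↦ mul_nonneg (poissonWeight_nonneg hμ n) (hg0 n)

lemma poissonTransform_le_add_exp (hg : Antitone g) (hμ : 0 ≤ μ) {r : ℝ} (hr0 : 0 < r)
    (hr1 : r ≤ 1) {m : ℕ} (hm : m ≤ r * μ) :
    poissonTransform g μ ≤ g m + C * exp (chernoffExponent r * μ) := by
  have hC : 0 ≤ C := (hg0 0).trans (hgC 0)
  have := mul_le_mul_of_nonneg_left (sum_range_poissonWeight_le hμ hr0 hr1 hm) hC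
  linarith [poissonTransform_le hg0 hgC hg hμ m]

lemma sub_exp_le_poissonTransform (hg : Antitone g) (hμ : 0 ≤ μ) {r : ℝ} (hr : 1 ≤ r) {m : ℕ}
    (hm : r * μ ≤ m) :
    g m - C * exp (chernoffExponent r * μ) ≤ poissonTransform g μ := by
  have hC : 0 ≤ C := (hg0 0).trans (hgC 0)
  have htail := tsum_poissonWeight_add_le hμ hr (m := m + 1) (by push_cast; linarith)
  have := mul_le_mul_of_nonneg_left htail hC
  linarith [le_poissonTransform hg0 hgC hg hμ m]

end PoissonTransform

lemma tendsto_of_eventually_squeezed {α ι κ κ' : Type*} [TopologicalSpace α] [LinearOrder α]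
    [OrderTopology α] {l : Filter ι} {k : Filter κ} {k' : Filter κ'} [k.NeBot] [k'.NeBot]
    {u : ι → α} {a : α} {lo : κ → α} {hi : κ' → α}
    (hlo : Tendsto lo k (𝓝 a)) (hhi : Tendsto hi k' (𝓝 a))
    (hlower : ∀ᶠ t in k, ∃ v : ι → α, Tendsto v l (𝓝 (lo t)) ∧ v ≤ᶠ[l] u)
    (hupper : ∀ᶠ t in k', ∃ w : ι → α, Tendsto w l (𝓝 (hi t)) ∧ u ≤ᶠ[l] w) :
    Tendsto u l (𝓝 a) := by
  refine tendsto_order.2 ⟨fun b hb ↦ ?_, fun b hb ↦ ?_⟩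
  · obtain ⟨t, hbt, v, hv, hvu⟩ := ((hlo.eventually (lt_mem_nhds hb)).and hlower).exists
    filter_upwards [hv.eventually (lt_mem_nhds hbt), hvu] with i h1 h2 using h1.trans_le h2
  · obtain ⟨t, htb, w, hw, huw⟩ := ((hhi.eventually (gt_mem_nhds hb)).and hupper).exists
    filter_upwards [hw.eventually (gt_mem_nhds htb), huw] with i h1 h2 using h2.trans_lt h1

lemma tendsto_rpow_mul_comp_of_tendsto_div {g : ℕ → ℝ} {s a c : ℝ} (hc : 0 < c)
    (hg : Tendsto (fun n : ℕ ↦ (n : ℝ) ^ s * g n) atTop (𝓝 a)) {m : ℝ → ℕ}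
    (hm : Tendsto (fun x ↦ (m x : ℝ) / x) atTop (𝓝 c)) :
    Tendsto (fun x ↦ x ^ s * g (m x)) atTop (𝓝 (a * c ^ (-s))) := by
  have hm_top : Tendsto m atTop atTop := by
    refine tendsto_natCast_atTop_iff.1 ((hm.pos_mul_atTop hc tendsto_id).congr' ?_)
    filter_upwards [eventually_gt_atTop 0] with x hx
    exact div_mul_cancel₀ _ hx.ne'
  have hpow := ((continuousAt_rpow_const c (-s) (Or.inl hc.ne')).tendsto).comp hm
  refine ((hg.comp hm_top).mul hpow).congr' ?_
  filter_upwards [eventually_gt_atTop 0, hm_top.eventually_gt_atTop 0] with x hx hmx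
  have hmx' : (0 : ℝ) < m x := Nat.cast_pos.2 hmx
  simp only [Function.comp_apply]
  rw [rpow_neg (div_nonneg hmx'.le hx.le), div_rpow hmx'.le hx.le]
  field_simp

section PoissonTransformLimit

variable {g : ℕ → ℝ} {C s a : ℝ} (hg0 : ∀ n, 0 ≤ g n) (hgC : ∀ n, g n ≤ C) (hg : Antitone g)
include hg0 hgC hg

theorem tendsto_rpow_mul_poissonTransform
    (hlim : Tendsto (fun n : ℕ ↦ (n : ℝ) ^ s * g n) atTop (𝓝 a)) :
    Tendsto (fun μ ↦ μ ^ s * poissonTransform g μ) atTop (𝓝 a) := by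
  have hcont : Tendsto (fun r : ℝ ↦ a * r ^ (-s)) (𝓝 1) (𝓝 a) := by
    simpa using tendsto_const_nhds.mul (continuousAt_rpow_const 1 (-s) (Or.inl one_ne_zero))
  have herr {r : ℝ} (hr0 : 0 < r) (hr1 : r ≠ 1) :=
    (tendsto_rpow_mul_exp_chernoffExponent_mul s hr0 hr1).const_mul C
  refine tendsto_of_eventually_squeezed (k := 𝓝[>] 1) (k' := 𝓝[<] 1)
    (hcont.mono_left nhdsWithin_le_nhds) (hcont.mono_left nhdsWithin_le_nhds) ?_ ?_
  · filter_upwards [self_mem_nhdsWithin] with r (hr : 1 < r)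
    refine ⟨fun μ ↦ μ ^ s * g ⌈r * μ⌉₊ - C * (μ ^ s * exp (chernoffExponent r * μ)), ?_, ?_⟩
    · simpa using (tendsto_rpow_mul_comp_of_tendsto_div (by positivity) hlim
        (tendsto_nat_ceil_mul_div_atTop (by positivity))).sub (herr (by positivity) hr.ne')
    · filter_upwards [eventually_ge_atTop 0] with μ hμ
      have := sub_exp_le_poissonTransform hg0 hgC hg hμ hr.le (Nat.le_ceil (r * μ))
      calc _ = μ ^ s * (g ⌈r * μ⌉₊ - C * exp (chernoffExponent r * μ)) := by ring
        _ ≤ μ ^ s * poissonTransform g μ := by gcongr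
  · filter_upwards [Ioo_mem_nhdsLT zero_lt_one] with r ⟨hr0, hr1⟩
    refine ⟨fun μ ↦ μ ^ s * g ⌊r * μ⌋₊ + C * (μ ^ s * exp (chernoffExponent r * μ)), ?_, ?_⟩
    · simpa using (tendsto_rpow_mul_comp_of_tendsto_div hr0 hlim
        (tendsto_nat_floor_mul_div_atTop hr0.le)).add (herr hr0 hr1.ne)
    · filter_upwards [eventually_ge_atTop 0] with μ hμ
      have := poissonTransform_le_add_exp hg0 hgC hg hμ hr0 hr1.le
        (Nat.floor_le (by positivity))
      calc μ ^ s * poissonTransform g μ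
          ≤ μ ^ s * (g ⌊r * μ⌋₊ + C * exp (chernoffExponent r * μ)) := by gcongr
        _ = _ := by ring

theorem tendsto_rpow_mul_of_tendsto_poissonTransform
    (hlim : Tendsto (fun μ ↦ μ ^ s * poissonTransform g μ) atTop (𝓝 a)) :
    Tendsto (fun n : ℕ ↦ (n : ℝ) ^ s * g n) atTop (𝓝 a) := by
  have hcont : Tendsto (fun r : ℝ ↦ r ^ s * a) (𝓝 1) (𝓝 a) := by
    simpa using (continuousAt_rpow_const 1 s (Or.inl one_ne_zero)).tendsto.mul_const a
  have hbound_tendsto {r : ℝ} (hr0 : 0 < r) (hr1 : r ≠ 1) (c : ℝ) :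
      Tendsto (fun n : ℕ ↦ r ^ s * (((n : ℝ) / r) ^ s * poissonTransform g (n / r)
        + c * (((n : ℝ) / r) ^ s * exp (chernoffExponent r * (n / r))))) atTop
        (𝓝 (r ^ s * a)) := by
    have hμ := tendsto_natCast_atTop_atTop.atTop_div_const hr0
    simpa using ((hlim.comp hμ).add
      (((tendsto_rpow_mul_exp_chernoffExponent_mul s hr0 hr1).comp hμ).const_mul c)).const_mul
        (r ^ s)
  have hscale {r : ℝ} (hr0 : 0 < r) (n : ℕ) : r ^ s * ((n : ℝ) / r) ^ s = (n : ℝ) ^ s := by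
    rw [← mul_rpow hr0.le (by positivity), mul_div_cancel₀ _ hr0.ne']
  refine tendsto_of_eventually_squeezed (k := 𝓝[<] 1) (k' := 𝓝[>] 1)
    (hcont.mono_left nhdsWithin_le_nhds) (hcont.mono_left nhdsWithin_le_nhds) ?_ ?_
  · filter_upwards [Ioo_mem_nhdsLT zero_lt_one] with r ⟨hr0, hr1⟩
    refine ⟨_, hbound_tendsto hr0 hr1.ne (-C), Eventually.of_forall fun n ↦ ?_⟩
    have := poissonTransform_le_add_exp hg0 hgC hg (μ := n / r) (by positivity) hr0 hr1.le
      (m := n) (by rw [mul_div_cancel₀ _ hr0.ne'])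
    calc _ = (r ^ s * ((n : ℝ) / r) ^ s)
          * (poissonTransform g (n / r) - C * exp (chernoffExponent r * (n / r))) := by ring
      _ ≤ (n : ℝ) ^ s * g n := by rw [hscale hr0]; gcongr; linarith
  · filter_upwards [self_mem_nhdsWithin] with r (hr : 1 < r)
    have hr0 : 0 < r := by positivity
    refine ⟨_, hbound_tendsto hr0 hr.ne' C, Eventually.of_forall fun n ↦ ?_⟩
    have := sub_exp_le_poissonTransform hg0 hgC hg (μ := n / r) (by positivity) hr.le
      (m := n) (by rw [mul_div_cancel₀ _ hr0.ne'])
    calc (n : ℝ) ^ s * g n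
        ≤ (r ^ s * ((n : ℝ) / r) ^ s)
          * (poissonTransform g (n / r) + C * exp (chernoffExponent r * (n / r))) := by
          rw [hscale hr0]; gcongr; linarith
      _ = _ := by ring

end PoissonTransformLimit

theorem dePoissonization_limit_general (d : ℕ) (hd : 1 ≤ d) (p : ℝ)
    (f : ℝ → ℕ → ℝ) (C₀ : ℝ)
    (hnonneg : ∀ L > (0 : ℝ), ∀ n, 0 ≤ f L n)
    (hhom : ∀ L > (0 : ℝ), ∀ n, f L n = L ^ p * f 1 n)
    (hbdd : ∀ n, f 1 n ≤ C₀)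
    (hmono : ∀ m n : ℕ, m ≤ n → f 1 n ≤ f 1 m)
    (F : ℝ → ℝ)
    (hF : ∀ L > (0 : ℝ),
      F L = ∑' n : ℕ, ((poissonPMF (Real.toNNReal (L ^ d))) n).toReal * f L n) :
    (∀ a : ℝ, Tendsto (fun n : ℕ => (n : ℝ) ^ (p / d) * f 1 n) atTop (nhds a) →
        Tendsto F atTop (nhds a))
      ∧ (∀ a : ℝ, Tendsto F atTop (nhds a) →
        Tendsto (fun n : ℕ => (n : ℝ) ^ (p / d) * f 1 n) atTop (nhds a)) := by
  have hd0 : d ≠ 0 := by omega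
  have hFG : ∀ L > (0 : ℝ), F L = (L ^ d) ^ (p / d) * poissonTransform (f 1) (L ^ d) := by
    intro L hL
    rw [← rpow_natCast, ← rpow_mul hL.le, mul_div_cancel₀ _ (Nat.cast_ne_zero.2 hd0), hF L hL,
      poissonTransform, ← tsum_mul_left]
    refine tsum_congr fun n ↦ ?_
    rw [poissonPMF_toReal, coe_toNNReal _ (by positivity), hhom L hL, rpow_natCast]
    ring
  have hg : Antitone (f 1) := fun m n hmn ↦ hmono m n hmn
  refine ⟨fun a ha ↦ ?_, fun a ha ↦ ?_⟩
  · refine ((tendsto_rpow_mul_poissonTransform (hnonneg 1 one_pos) hbdd hg ha).comp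
      (tendsto_pow_atTop hd0)).congr' ?_
    filter_upwards [eventually_gt_atTop 0] with L hL using (hFG L hL).symm
  · refine tendsto_rpow_mul_of_tendsto_poissonTransform (hnonneg 1 one_pos) hbdd hg
      ((ha.comp (tendsto_rpow_atTop (by positivity : (0 : ℝ) < (d : ℝ)⁻¹))).congr' ?_)
    filter_upwards [eventually_gt_atTop 0] with μ hμ
    rw [Function.comp_apply, hFG _ (by positivity), rpow_inv_natCast_pow hμ.le hd0]

/-- De-Poissonization, limit version: under the homogeneity, boundedness and
monotonicity assumptions, with `N_L` Poisson of parameter `L^d` and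
`F(L) = E[f(L,N_L)]`, the limit `lim_n n^{p/d} f(1,n)` exists iff
`lim_{L→∞} F(L)` exists, and then they are equal. -/
theorem dePoissonization_limit (d : ℕ) (hd : 1 ≤ d) (p : ℝ) (hp : 1 ≤ p)
    (f : ℝ → ℕ → ℝ) (C₀ : ℝ)
    (hnonneg : ∀ L > (0 : ℝ), ∀ n, 0 ≤ f L n)
    (hhom : ∀ L > (0 : ℝ), ∀ n, f L n = L ^ p * f 1 n)
    (hbdd : ∀ n, f 1 n ≤ C₀)
    (hmono : ∀ m n : ℕ, m ≤ n → f 1 n ≤ f 1 m)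
    (F : ℝ → ℝ)
    (hF : ∀ L > (0 : ℝ),
      F L = ∑' n : ℕ, ((poissonPMF (Real.toNNReal (L ^ d))) n).toReal * f L n) :
    (∀ a : ℝ, Tendsto (fun n : ℕ => (n : ℝ) ^ (p / d) * f 1 n) atTop (nhds a) →
        Tendsto F atTop (nhds a))
      ∧ (∀ a : ℝ, Tendsto F atTop (nhds a) →
        Tendsto (fun n : ℕ => (n : ℝ) ^ (p / d) * f 1 n) atTop (nhds a)) :=
  dePoissonization_limit_general d hd p f C₀ hnonneg hhom hbdd hmono F hF
end
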